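/- Let Ω ⊆ ℝ² be open and let r, r* : Ω → ℝ³ be C³ immersions whose first fundamental forms coincide on Ω, i.e. E = E*, F = F*, G = G* pointwise (so that the map r(p) ↦ r*(p) is an isometric deformation). Then the Gaussian curvatures coincide: K = K* at every point of Ω. -/

import Mathlib

/-! With the normal `(r_u × r_v)/|r_u × r_v|`, the Binet–Cauchy identity writes
`(LN − M²)(EG − F²)` as a difference of two `3 × 3` Gram determinants: of `r_uu, r_u, r_v`
against `r_vv, r_u, r_v`, and of `r_uv, r_u, r_v` against itself. Their entries are `E, F, G`,
inner products such as `r_uu·r_v = F_u − E_v/2` read off from first derivatives of `E, F, G`,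
and the corners `r_uu·r_vv` and `r_uv·r_uv`. Only the difference of the corners enters, and it
equals `F_uv − E_vv/2 − G_uu/2` because the third derivatives of `r` cancel by symmetry of mixed
partials. This is Brioschi's formula: `K` depends on `E, F, G` and their derivatives alone, so
an isometry preserves it. -/

noncomputable section

/-- Euclidean dot product on `ℝ³`. -/
def dot3 (x y : Fin 3 → ℝ) : ℝ := x 0 * y 0 + x 1 * y 1 + x 2 * y 2

/-- Cross product on `ℝ³`. -/
def cross3 (x y : Fin 3 → ℝ) : Fin 3 → ℝ :=
  ![x 1 * y 2 - x 2 * y 1, x 2 * y 0 - x 0 * y 2, x 0 * y 1 - x 1 * y 0]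

/-- Euclidean length on `ℝ³`. -/
def len3 (x : Fin 3 → ℝ) : ℝ := Real.sqrt (dot3 x x)

/-- Partial derivative in the first variable. -/
def du {E : Type*} [NormedAddCommGroup E] [NormedSpace ℝ E]
    (f : ℝ × ℝ → E) (p : ℝ × ℝ) : E := fderiv ℝ f p (1, 0)

/-- Partial derivative in the second variable. -/
def dv {E : Type*} [NormedAddCommGroup E] [NormedSpace ℝ E]
    (f : ℝ × ℝ → E) (p : ℝ × ℝ) : E := fderiv ℝ f p (0, 1)

/-- First fundamental form coefficient `E = r_u · r_u`. -/
def Icoef₁ (r : ℝ × ℝ → Fin 3 → ℝ) (p : ℝ × ℝ) : ℝ := dot3 (du r p) (du r p)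

/-- First fundamental form coefficient `F = r_u · r_v`. -/
def Icoef₂ (r : ℝ × ℝ → Fin 3 → ℝ) (p : ℝ × ℝ) : ℝ := dot3 (du r p) (dv r p)

/-- First fundamental form coefficient `G = r_v · r_v`. -/
def Icoef₃ (r : ℝ × ℝ → Fin 3 → ℝ) (p : ℝ × ℝ) : ℝ := dot3 (dv r p) (dv r p)

/-- Unit normal `n = (r_u × r_v)/|r_u × r_v|`. -/
def unitNormal (r : ℝ × ℝ → Fin 3 → ℝ) (p : ℝ × ℝ) : Fin 3 → ℝ :=
  (len3 (cross3 (du r p) (dv r p)))⁻¹ • cross3 (du r p) (dv r p)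

/-- Second fundamental form coefficient `L = r_uu · n`. -/
def IIcoef₁ (r : ℝ × ℝ → Fin 3 → ℝ) (p : ℝ × ℝ) : ℝ := dot3 (du (du r) p) (unitNormal r p)

/-- Second fundamental form coefficient `M = r_uv · n`. -/
def IIcoef₂ (r : ℝ × ℝ → Fin 3 → ℝ) (p : ℝ × ℝ) : ℝ := dot3 (dv (du r) p) (unitNormal r p)

/-- Second fundamental form coefficient `N = r_vv · n`. -/
def IIcoef₃ (r : ℝ × ℝ → Fin 3 → ℝ) (p : ℝ × ℝ) : ℝ := dot3 (dv (dv r) p) (unitNormal r p)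

/-- Gaussian curvature `K = (LN − M²)/(EG − F²)`. -/
def gaussK (r : ℝ × ℝ → Fin 3 → ℝ) (p : ℝ × ℝ) : ℝ :=
  (IIcoef₁ r p * IIcoef₃ r p - IIcoef₂ r p ^ 2) /
    (Icoef₁ r p * Icoef₃ r p - Icoef₂ r p ^ 2)

/-- Mean curvature `H = (EN − 2FM + GL)/(2(EG − F²))`. -/
def meanH (r : ℝ × ℝ → Fin 3 → ℝ) (p : ℝ × ℝ) : ℝ :=
  (Icoef₁ r p * IIcoef₃ r p - 2 * Icoef₂ r p * IIcoef₂ r p + Icoef₃ r p * IIcoef₁ r p) /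
    (2 * (Icoef₁ r p * Icoef₃ r p - Icoef₂ r p ^ 2))

theorem dot3_comm (x y : Fin 3 → ℝ) : dot3 x y = dot3 y x := by
  unfold dot3; ring

theorem dot3_smul_right (c : ℝ) (x y : Fin 3 → ℝ) : dot3 x (c • y) = c * dot3 x y := by
  simp only [dot3, Pi.smul_apply, smul_eq_mul]; ring

theorem dot3_self_nonneg (x : Fin 3 → ℝ) : 0 ≤ dot3 x x :=
  add_nonneg (add_nonneg (mul_self_nonneg _) (mul_self_nonneg _)) (mul_self_nonneg _)

theorem dot3_cross3_self (a b : Fin 3 → ℝ) :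
    dot3 (cross3 a b) (cross3 a b) = dot3 a a * dot3 b b - dot3 a b ^ 2 := by
  simp only [dot3, cross3, Matrix.cons_val_zero, Matrix.cons_val_one, Matrix.cons_val]
  ring

theorem len3_sq (x : Fin 3 → ℝ) : len3 x ^ 2 = dot3 x x :=
  Real.sq_sqrt (dot3_self_nonneg x)

theorem dot3_cross3_mul_dot3_cross3 (x y a b : Fin 3 → ℝ) :
    dot3 x (cross3 a b) * dot3 y (cross3 a b) =
      !![dot3 x y, dot3 x a, dot3 x b;
        dot3 y a, dot3 a a, dot3 a b;
        dot3 y b, dot3 a b, dot3 b b].det := by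
  simp only [dot3, cross3, Matrix.det_fin_three, Matrix.of_apply, Matrix.cons_val',
    Matrix.cons_val_fin_one, Matrix.cons_val_zero, Matrix.cons_val_one, Matrix.cons_val]
  ring

theorem secondForm_det_div_eq_brioschi (a b A B C : Fin 3 → ℝ) :
    (dot3 A ((len3 (cross3 a b))⁻¹ • cross3 a b) * dot3 C ((len3 (cross3 a b))⁻¹ • cross3 a b)
        - dot3 B ((len3 (cross3 a b))⁻¹ • cross3 a b) ^ 2)
        / (dot3 a a * dot3 b b - dot3 a b ^ 2) =
      (!![dot3 A C - dot3 B B, dot3 A a, dot3 A b;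
          dot3 C a, dot3 a a, dot3 a b;
          dot3 C b, dot3 a b, dot3 b b].det -
        !![0, dot3 B a, dot3 B b;
          dot3 B a, dot3 a a, dot3 a b;
          dot3 B b, dot3 a b, dot3 b b].det) / (dot3 a a * dot3 b b - dot3 a b ^ 2) ^ 2 := by
  set W := dot3 a a * dot3 b b - dot3 a b ^ 2
  rcases eq_or_ne W 0 with hW | hW
  · simp [hW]
  have hlen : len3 (cross3 a b) ^ 2 = W := by rw [len3_sq, dot3_cross3_self]
  have hgram : dot3 A (cross3 a b) * dot3 C (cross3 a b) - dot3 B (cross3 a b) ^ 2 =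
      !![dot3 A C - dot3 B B, dot3 A a, dot3 A b;
          dot3 C a, dot3 a a, dot3 a b;
          dot3 C b, dot3 a b, dot3 b b].det -
        !![0, dot3 B a, dot3 B b;
          dot3 B a, dot3 a a, dot3 a b;
          dot3 B b, dot3 a b, dot3 b b].det := by
    rw [sq, dot3_cross3_mul_dot3_cross3, dot3_cross3_mul_dot3_cross3]
    simp only [Matrix.det_fin_three, Matrix.of_apply, Matrix.cons_val', Matrix.cons_val_fin_one,
      Matrix.cons_val_zero, Matrix.cons_val_one, Matrix.cons_val]
    ring
  rw [dot3_smul_right, dot3_smul_right, dot3_smul_right, ← hgram]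
  have hlen0 : len3 (cross3 a b) ≠ 0 := by
    rintro h; rw [h] at hlen; exact hW (by simpa using hlen.symm)
  field_simp
  rw [hlen]; ring

open Filter Topology

section PartialDerivatives

variable {F : Type*} [NormedAddCommGroup F] [NormedSpace ℝ F] {f g : ℝ × ℝ → F} {p : ℝ × ℝ}

theorem Filter.EventuallyEq.eventuallyEq_du (h : f =ᶠ[𝓝 p] g) : du f =ᶠ[𝓝 p] du g :=
  h.fderiv.mono fun _ hq => DFunLike.congr_fun hq _

theorem Filter.EventuallyEq.eventuallyEq_dv (h : f =ᶠ[𝓝 p] g) : dv f =ᶠ[𝓝 p] dv g :=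
  h.fderiv.mono fun _ hq => DFunLike.congr_fun hq _

theorem dv_add (hf : DifferentiableAt ℝ f p) (hg : DifferentiableAt ℝ g p) :
    dv (fun q => f q + g q) p = dv f p + dv g p := by
  simp only [dv, fderiv_fun_add hf hg, add_apply]

theorem ContDiffAt.contDiffAt_du {m n : WithTop ℕ∞} (hf : ContDiffAt ℝ n f p) (hmn : m + 1 ≤ n) :
    ContDiffAt ℝ m (du f) p :=
  (hf.fderiv_right hmn).clm_apply contDiffAt_const

theorem ContDiffAt.contDiffAt_dv {m n : WithTop ℕ∞} (hf : ContDiffAt ℝ n f p) (hmn : m + 1 ≤ n) :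
    ContDiffAt ℝ m (dv f) p :=
  (hf.fderiv_right hmn).clm_apply contDiffAt_const

theorem fderiv_fderiv_apply (hf : DifferentiableAt ℝ (fderiv ℝ f) p) (v w : ℝ × ℝ) :
    fderiv ℝ (fun q => fderiv ℝ f q v) p w = fderiv ℝ (fderiv ℝ f) p w v := by
  simp [fderiv_clm_apply hf (differentiableAt_const v)]

theorem ContDiffAt.dv_du_eq_du_dv (hf : ContDiffAt ℝ 2 f p) : dv (du f) p = du (dv f) p := by
  have hf' : DifferentiableAt ℝ (fderiv ℝ f) p :=
    (hf.fderiv_right (m := 1) (by norm_num)).differentiableAt one_ne_zero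
  calc dv (du f) p = fderiv ℝ (fderiv ℝ f) p (0, 1) (1, 0) := fderiv_fderiv_apply hf' _ _
    _ = fderiv ℝ (fderiv ℝ f) p (1, 0) (0, 1) := (hf.isSymmSndFDerivAt (by simp)).eq _ _
    _ = du (dv f) p := (fderiv_fderiv_apply hf' _ _).symm

end PartialDerivatives

section DotProduct

variable {f g : ℝ × ℝ → Fin 3 → ℝ} {p : ℝ × ℝ}

theorem DifferentiableAt.dot3 (hf : DifferentiableAt ℝ f p) (hg : DifferentiableAt ℝ g p) :
    DifferentiableAt ℝ (fun q => dot3 (f q) (g q)) p := by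
  have hfi := differentiableAt_pi.1 hf
  have hgi := differentiableAt_pi.1 hg
  unfold _root_.dot3
  fun_prop

theorem fderiv_dot3_apply (hf : DifferentiableAt ℝ f p) (hg : DifferentiableAt ℝ g p)
    (v : ℝ × ℝ) :
    fderiv ℝ (fun q => dot3 (f q) (g q)) p v
      = dot3 (fderiv ℝ f p v) (g p) + dot3 (f p) (fderiv ℝ g p v) := by
  have hfi := differentiableAt_pi.1 hf
  have hgi := differentiableAt_pi.1 hg
  have H := (((hfi 0).hasFDerivAt.fun_mul (hgi 0).hasFDerivAt).fun_add
    ((hfi 1).hasFDerivAt.fun_mul (hgi 1).hasFDerivAt)).fun_add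
    ((hfi 2).hasFDerivAt.fun_mul (hgi 2).hasFDerivAt)
  unfold dot3
  rw [H.fderiv]
  simp only [fderiv_apply hf, fderiv_apply hg, add_apply, smul_apply,
    ContinuousLinearMap.comp_apply, ContinuousLinearMap.proj_apply, smul_eq_mul]
  ring

theorem du_dot3 (hf : DifferentiableAt ℝ f p) (hg : DifferentiableAt ℝ g p) :
    du (fun q => dot3 (f q) (g q)) p = dot3 (du f p) (g p) + dot3 (f p) (du g p) :=
  fderiv_dot3_apply hf hg _

theorem dv_dot3 (hf : DifferentiableAt ℝ f p) (hg : DifferentiableAt ℝ g p) :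
    dv (fun q => dot3 (f q) (g q)) p = dot3 (dv f p) (g p) + dot3 (f p) (dv g p) :=
  fderiv_dot3_apply hf hg _

end DotProduct

section RealFunctions

variable {f : ℝ × ℝ → ℝ} {p : ℝ × ℝ}

theorem du_const_mul (hf : DifferentiableAt ℝ f p) (c : ℝ) :
    du (fun q => c * f q) p = c * du f p := by
  simp only [du, fderiv_const_mul hf, smul_apply, smul_eq_mul]

theorem dv_const_mul (hf : DifferentiableAt ℝ f p) (c : ℝ) :
    dv (fun q => c * f q) p = c * dv f p := by
  simp only [dv, fderiv_const_mul hf, smul_apply, smul_eq_mul]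

end RealFunctions

section FirstFundamentalForm

variable {r : ℝ × ℝ → Fin 3 → ℝ} {p : ℝ × ℝ}

theorem ContDiffAt.differentiableAt_du (hr : ContDiffAt ℝ 2 r p) :
    DifferentiableAt ℝ (du r) p :=
  (hr.contDiffAt_du (m := 1) (by norm_num)).differentiableAt one_ne_zero

theorem ContDiffAt.differentiableAt_dv (hr : ContDiffAt ℝ 2 r p) :
    DifferentiableAt ℝ (dv r) p :=
  (hr.contDiffAt_dv (m := 1) (by norm_num)).differentiableAt one_ne_zero

theorem du_Icoef₁ (hr : ContDiffAt ℝ 2 r p) :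
    du (Icoef₁ r) p = 2 * dot3 (du (du r) p) (du r p) := by
  unfold Icoef₁
  rw [du_dot3 hr.differentiableAt_du hr.differentiableAt_du, dot3_comm (du r p)]
  ring

theorem dv_Icoef₁ (hr : ContDiffAt ℝ 2 r p) :
    dv (Icoef₁ r) p = 2 * dot3 (dv (du r) p) (du r p) := by
  unfold Icoef₁
  rw [dv_dot3 hr.differentiableAt_du hr.differentiableAt_du, dot3_comm (du r p)]
  ring

theorem du_Icoef₂ (hr : ContDiffAt ℝ 2 r p) :
    du (Icoef₂ r) p = dot3 (du (du r) p) (dv r p) + dot3 (dv (du r) p) (du r p) := by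
  unfold Icoef₂
  rw [du_dot3 hr.differentiableAt_du hr.differentiableAt_dv, hr.dv_du_eq_du_dv,
    dot3_comm (du r p)]

theorem dv_Icoef₂ (hr : ContDiffAt ℝ 2 r p) :
    dv (Icoef₂ r) p = dot3 (dv (du r) p) (dv r p) + dot3 (dv (dv r) p) (du r p) := by
  unfold Icoef₂
  rw [dv_dot3 hr.differentiableAt_du hr.differentiableAt_dv, dot3_comm (du r p)]

theorem du_Icoef₃ (hr : ContDiffAt ℝ 2 r p) :
    du (Icoef₃ r) p = 2 * dot3 (dv (du r) p) (dv r p) := by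
  unfold Icoef₃
  rw [du_dot3 hr.differentiableAt_dv hr.differentiableAt_dv, hr.dv_du_eq_du_dv,
    dot3_comm (dv r p)]
  ring

theorem dv_Icoef₃ (hr : ContDiffAt ℝ 2 r p) :
    dv (Icoef₃ r) p = 2 * dot3 (dv (dv r) p) (dv r p) := by
  unfold Icoef₃
  rw [dv_dot3 hr.differentiableAt_dv hr.differentiableAt_dv, dot3_comm (dv r p)]
  ring

theorem dv_du_Icoef₂_sub (hr : ContDiffAt ℝ 3 r p) :
    dv (du (Icoef₂ r)) p - dv (dv (Icoef₁ r)) p / 2 - du (du (Icoef₃ r)) p / 2 =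
      dot3 (du (du r) p) (dv (dv r) p) - dot3 (dv (du r) p) (dv (du r) p) := by
  have hr2 : ContDiffAt ℝ 2 r p := hr.of_le (by norm_num)
  have hr2_near : ∀ᶠ q in 𝓝 p, ContDiffAt ℝ 2 r q :=
    (hr.eventually (by simp)).mono fun q hq => hq.of_le (by norm_num)
  have hdu : ContDiffAt ℝ 2 (du r) p := hr.contDiffAt_du (by norm_num)
  have ha := hr2.differentiableAt_du
  have hb := hr2.differentiableAt_dv
  have hA := hdu.differentiableAt_du
  have hB := hdu.differentiableAt_dv
  have hEv : dv (Icoef₁ r) =ᶠ[𝓝 p] fun q => 2 * dot3 (dv (du r) q) (du r q) :=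
    hr2_near.mono fun q hq => dv_Icoef₁ hq
  have hFu : du (Icoef₂ r) =ᶠ[𝓝 p]
      fun q => dot3 (du (du r) q) (dv r q) + dot3 (dv (du r) q) (du r q) :=
    hr2_near.mono fun q hq => du_Icoef₂ hq
  have hGu : du (Icoef₃ r) =ᶠ[𝓝 p] fun q => 2 * dot3 (dv (du r) q) (dv r q) :=
    hr2_near.mono fun q hq => du_Icoef₃ hq
  rw [hFu.eventuallyEq_dv.eq_of_nhds, hEv.eventuallyEq_dv.eq_of_nhds,
    hGu.eventuallyEq_du.eq_of_nhds, dv_add (hA.dot3 hb) (hB.dot3 ha),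
    dv_const_mul (hB.dot3 ha), du_const_mul (hB.dot3 hb), dv_dot3 hA hb, dv_dot3 hB ha,
    du_dot3 hB hb, hdu.dv_du_eq_du_dv, ← hr2.dv_du_eq_du_dv]
  ring

end FirstFundamentalForm

def brioschi (E F G : ℝ × ℝ → ℝ) (p : ℝ × ℝ) : ℝ :=
  (!![dv (du F) p - dv (dv E) p / 2 - du (du G) p / 2, du E p / 2, du F p - dv E p / 2;
      dv F p - du G p / 2, E p, F p;
      dv G p / 2, F p, G p].det -
    !![0, dv E p / 2, du G p / 2;
      dv E p / 2, E p, F p;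
      du G p / 2, F p, G p].det) / (E p * G p - F p ^ 2) ^ 2

theorem brioschi_congr {E F G E' F' G' : ℝ × ℝ → ℝ} {p : ℝ × ℝ}
    (hE : E =ᶠ[𝓝 p] E') (hF : F =ᶠ[𝓝 p] F') (hG : G =ᶠ[𝓝 p] G') :
    brioschi E F G p = brioschi E' F' G' p := by
  unfold brioschi
  rw [hE.eq_of_nhds, hF.eq_of_nhds, hG.eq_of_nhds, hE.eventuallyEq_du.eq_of_nhds,
    hE.eventuallyEq_dv.eq_of_nhds, hF.eventuallyEq_du.eq_of_nhds, hF.eventuallyEq_dv.eq_of_nhds,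
    hG.eventuallyEq_du.eq_of_nhds, hG.eventuallyEq_dv.eq_of_nhds,
    hF.eventuallyEq_du.eventuallyEq_dv.eq_of_nhds, hE.eventuallyEq_dv.eventuallyEq_dv.eq_of_nhds,
    hG.eventuallyEq_du.eventuallyEq_du.eq_of_nhds]

theorem gaussK_eq_brioschi {r : ℝ × ℝ → Fin 3 → ℝ} {p : ℝ × ℝ} (hr : ContDiffAt ℝ 3 r p) :
    gaussK r p = brioschi (Icoef₁ r) (Icoef₂ r) (Icoef₃ r) p := by
  have hr2 : ContDiffAt ℝ 2 r p := hr.of_le (by norm_num)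
  refine (secondForm_det_div_eq_brioschi (du r p) (dv r p) (du (du r) p) (dv (du r) p)
    (dv (dv r) p)).trans ?_
  unfold brioschi
  rw [dv_du_Icoef₂_sub hr, du_Icoef₁ hr2, dv_Icoef₁ hr2, du_Icoef₂ hr2, dv_Icoef₂ hr2,
    du_Icoef₃ hr2, dv_Icoef₃ hr2]
  simp only [Icoef₁, Icoef₂, Icoef₃, mul_div_cancel_left₀ _ (two_ne_zero (α := ℝ)),
    add_sub_cancel_right, add_sub_cancel_left]

theorem theorema_egregium_general
    (Ω : Set (ℝ × ℝ)) (hΩ : IsOpen Ω)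
    (r rstar : ℝ × ℝ → Fin 3 → ℝ)
    (hr : ContDiffOn ℝ 3 r Ω) (hrstar : ContDiffOn ℝ 3 rstar Ω)
    (hE : ∀ p ∈ Ω, Icoef₁ rstar p = Icoef₁ r p)
    (hF : ∀ p ∈ Ω, Icoef₂ rstar p = Icoef₂ r p)
    (hG : ∀ p ∈ Ω, Icoef₃ rstar p = Icoef₃ r p) :
    ∀ p ∈ Ω, gaussK rstar p = gaussK r p := by
  intro p hp
  have hΩp : Ω ∈ 𝓝 p := hΩ.mem_nhds hp
  rw [gaussK_eq_brioschi (hrstar.contDiffAt hΩp), gaussK_eq_brioschi (hr.contDiffAt hΩp)]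
  exact brioschi_congr (eventually_of_mem hΩp hE) (eventually_of_mem hΩp hF)
    (eventually_of_mem hΩp hG)

/-- **Theorema egregium** (second claim of Proposition 6.1): if two `C³` immersions
over the same domain have identical first fundamental forms (i.e. the map between
them is an isometric deformation), then their Gaussian curvatures coincide. -/
theorem theorema_egregium
    (Ω : Set (ℝ × ℝ)) (hΩ : IsOpen Ω)
    (r rstar : ℝ × ℝ → Fin 3 → ℝ)
    (hr : ContDiffOn ℝ 3 r Ω) (hrstar : ContDiffOn ℝ 3 rstar Ω)
    (himm : ∀ p ∈ Ω, cross3 (du r p) (dv r p) ≠ 0)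
    (himmstar : ∀ p ∈ Ω, cross3 (du rstar p) (dv rstar p) ≠ 0)
    (hE : ∀ p ∈ Ω, Icoef₁ rstar p = Icoef₁ r p)
    (hF : ∀ p ∈ Ω, Icoef₂ rstar p = Icoef₂ r p)
    (hG : ∀ p ∈ Ω, Icoef₃ rstar p = Icoef₃ r p) :
    ∀ p ∈ Ω, gaussK rstar p = gaussK r p :=
  theorema_egregium_general Ω hΩ r rstar hr hrstar hE hF hG
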